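/- arXiv:1402.4112 — 2 statements merged into one kernel-verified Lean document; each statement's English description precedes it below -/
import Mathlib

section
/- Let (A_n)_{n=0}^∞ be an increasing sequence (A_0 ⊆ A_1 ⊆ ⋯) of finite nonempty alphabets and let A = ⋃_{n∈ℕ} A_n. Then for every finite coloring of W(A) there exists an infinite sequence (t_n(x))_{n=0}^∞ of variable words over A such that for every n ∈ ℕ, every choice of indices m_0 < m_1 < ⋯ < m_n, and every choice of letters a_0 ∈ A_{m_0}, a_1 ∈ A_{m_1}, …, a_n ∈ A_{m_n}, the concatenated words t_{m_0}(a_0) t_{m_1}(a_1) ⋯ t_{m_n}(a_n) all receive the same color. -/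
/-!
Consider the ultrafilters `U` on variable words over `⋃ n, A n` for which, for each `n`, the
images `U.map (subst a)` with `a ∈ A n` all coincide. They form a closed subsemigroup of the
Stone–Čech compactification, nonempty by compactness and the finite Hales–Jewett theorem over
`A N`, so by Ellis–Numakura it contains an idempotent `U`. As the `A n` increase,
`p = U.map (subst a)` is a single idempotent ultrafilter on `W(A)`, and one colour class `C` is
`p`-large. Then, as in the Galvin–Glazer proof of Hindman's theorem, pick `t k` from a `U`-large
set so that each `subst a (t k)`, `a ∈ A k`, lies in the current `p`-large set `S k` together with
`p`-almost all of its right extensions, and shrink `S k` accordingly: all products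
`t_{m_0}(a_0) ⋯ t_{m_n}(a_n)` then stay in `C`.
-/

/- Words over an alphabet are `List α`.  The variable symbol `x` is modelled by
`none : Option α`, and variable words are lists over `Option α` containing `none`. -/

namespace HJ

variable {α : Type*}

/-- Substitution of the letter `a` for every occurrence of the variable in a
variable word, producing a constant word. -/
def substC (s : List (Option α)) (a : α) : List α :=
  s.map (fun b => b.getD a)

/-- Substitution of `b ∈ A ∪ {x}` (a letter `some a` or the variable `none`)
for every occurrence of the variable. -/
def substV (s : List (Option α)) (b : Option α) : List (Option α) :=
  s.map (fun c => Option.elim c b some)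

/-- `s` is a variable word over the alphabet `S`: all its letters lie in `S`
and it contains at least one occurrence of the variable. -/
def IsVarWord (S : Set α) (s : List (Option α)) : Prop :=
  (∀ a : α, some a ∈ s → a ∈ S) ∧ none ∈ s

/-- `W(S)`: the set of (constant) words over the alphabet `S`. -/
def WordsOver (S : Set α) : Set (List α) :=
  { w | ∀ a ∈ w, a ∈ S }

/-- The constant span of the sequence `s` of variable words, with indices
restricted to `I` and the letter substituted at position `l i` taken from the
alphabet `B (l i)`: all concatenations `s_{l_0}(a_0) ⋯ s_{l_n}(a_n)` with
`l_0 < ⋯ < l_n` in `I` and `a_i ∈ B (l_i)`. -/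
def constSpan (B : ℕ → Set α) (s : ℕ → List (Option α)) (I : Set ℕ) :
    Set (List α) :=
  { w | ∃ (n : ℕ) (l : Fin (n + 1) → ℕ) (a : Fin (n + 1) → α),
      StrictMono l ∧ (∀ i, l i ∈ I) ∧ (∀ i, a i ∈ B (l i)) ∧
      w = (List.ofFn fun i => substC (s (l i)) (a i)).flatten }

/-- The variable span of the sequence `s` of variable words, with indices
restricted to `I` and alphabets given by `B`: all concatenations
`s_{l_0}(b_0) ⋯ s_{l_n}(b_n)` with `l_0 < ⋯ < l_n` in `I` and
`b_i ∈ B (l_i) ∪ {x}` which contain at least one occurrence of the variable. -/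
def varSpan (B : ℕ → Set α) (s : ℕ → List (Option α)) (I : Set ℕ) :
    Set (List (Option α)) :=
  { w | ∃ (n : ℕ) (l : Fin (n + 1) → ℕ) (b : Fin (n + 1) → Option α),
      StrictMono l ∧ (∀ i, l i ∈ I) ∧
      (∀ i, ∀ a : α, b i = some a → a ∈ B (l i)) ∧
      none ∈ w ∧
      w = (List.ofFn fun i => substV (s (l i)) (b i)).flatten }

/-- `(t_0, …, t_l)` is a finite extracted subsequence of `s` (with alphabets `B`):
there are `0 = m_0 < m_1 < ⋯` with `t_i` in the variable span of
`(s_n)_{n = m_i}^{m_{i+1} - 1}` (with alphabets `B`) for all `i ≤ l`. -/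
def ExtractedFin (B : ℕ → Set α) (s t : ℕ → List (Option α)) (l : ℕ) : Prop :=
  ∃ m : ℕ → ℕ, m 0 = 0 ∧ StrictMono m ∧
    ∀ i ≤ l, t i ∈ varSpan B s (Set.Ico (m i) (m (i + 1)))

/-- `t` is an infinite extracted subsequence of `s` (with alphabets `B`). -/
def Extracted (B : ℕ → Set α) (s t : ℕ → List (Option α)) : Prop :=
  ∀ l : ℕ, ExtractedFin B s t l

/-- `E` is large in `s` (with alphabets `B`): `E` meets the constant span of
every infinite extracted subsequence of `s`. -/
def IsLarge (B : ℕ → Set α) (E : Set (List α)) (s : ℕ → List (Option α)) : Prop :=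
  ∀ w : ℕ → List (Option α), Extracted B s w →
    (E ∩ constSpan B w Set.univ).Nonempty

/-- `E_F = {z ∈ W(S) : w ++ z ∈ E for every w ∈ F}`. -/
def wordQuot (S : Set α) (E F : Set (List α)) : Set (List α) :=
  { z | z ∈ WordsOver S ∧ ∀ w ∈ F, w ++ z ∈ E }

end HJ

open Filter

attribute [local instance] Ultrafilter.mul Ultrafilter.semigroup

namespace Ultrafilter

variable {M N : Type*}

theorem mem_mul_iff [Mul M] {U V : Ultrafilter M} {s : Set M} :
    s ∈ U * V ↔ {m | {m' | m * m' ∈ s} ∈ V} ∈ U :=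
  Iff.rfl

theorem map_mulHom [Mul M] [Mul N] {F : Type*} [FunLike F M N] [MulHomClass F M N] (f : F)
    (U V : Ultrafilter M) : (U * V).map f = U.map f * V.map f := by
  ext s
  simp only [mem_map, mem_mul_iff, Set.mem_preimage, map_mul]
  rfl

theorem map_eq_map_iff {f g : M → N} {U : Ultrafilter M} :
    U.map f = U.map g ↔ ∀ s : Set N, {m | f m ∈ s ↔ g m ∈ s} ∈ U := by
  refine Ultrafilter.ext_iff.trans (forall_congr' fun s => ?_)
  change ((∀ᶠ m in U, f m ∈ s) ↔ ∀ᶠ m in U, g m ∈ s) ↔ ∀ᶠ m in U, (f m ∈ s ↔ g m ∈ s)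
  conv_rhs =>
    simp only [iff_iff_implies_and_implies, Filter.eventually_and, eventually_imp]
  exact iff_iff_implies_and_implies

end Ultrafilter

namespace HJ

variable {α : Type*}

def subst (a : α) : FreeMonoid (Option α) →* FreeMonoid α :=
  FreeMonoid.map (Option.getD · a)

theorem toList_subst (a : α) (s : FreeMonoid (Option α)) :
    (subst a s).toList = substC s.toList a :=
  FreeMonoid.toList_map _ _

def varWords (S : Set α) : Subsemigroup (FreeMonoid (Option α)) where
  carrier := {s | IsVarWord S s.toList}
  mul_mem' := by
    rintro s t ⟨hs, hs_var⟩ ⟨ht, -⟩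
    refine ⟨fun a ha => ?_, by simp [hs_var]⟩
    rw [FreeMonoid.toList_mul, List.mem_append] at ha
    rcases ha with h | h
    exacts [hs a h, ht a h]

theorem exists_isVarWord_subst_eq (B : Finset α) {κ : Type*} [Finite κ]
    (C : FreeMonoid α → κ) :
    ∃ s : FreeMonoid (Option α), IsVarWord B s.toList ∧
      ∀ a ∈ B, ∀ b ∈ B, C (subst a s) = C (subst b s) := by
  obtain ⟨ι, _, hι⟩ := Combinatorics.Line.exists_mono_in_high_dimension B κ
  let e := Fintype.equivFin ι
  let word (v : ι → α) : FreeMonoid α := FreeMonoid.ofList (List.ofFn (v ∘ e.symm))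
  obtain ⟨l, col, hl⟩ := hι fun v => C (word (Subtype.val ∘ v))
  let s : FreeMonoid (Option α) :=
    FreeMonoid.ofList (List.ofFn fun j => (l.idxFun (e.symm j)).map (↑))
  have hsubst (x : B) : subst (x : α) s = word (Subtype.val ∘ l x) := by
    apply FreeMonoid.toList.injective
    simp only [s, word, toList_subst, substC, FreeMonoid.toList_ofList, List.map_ofFn,
      Function.comp_def, Option.getD_map, Combinatorics.Line.coe_apply]
  refine ⟨s, ⟨fun a ha => ?_, ?_⟩, fun a ha b hb => ?_⟩
  · obtain ⟨j, hj⟩ := List.mem_ofFn.1 ha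
    obtain ⟨b, -, rfl⟩ := Option.map_eq_some_iff.1 hj
    exact b.2
  · obtain ⟨i, hi⟩ := l.proper
    exact List.mem_ofFn.2 ⟨e i, by simp [hi]⟩
  · rw [hsubst ⟨a, ha⟩, hsubst ⟨b, hb⟩]
    exact (hl _).trans (hl _).symm

section Coherent

variable (A : ℕ → Finset α)

def coherentUltrafilters : Set (Ultrafilter (FreeMonoid (Option α))) :=
  {U | ↑(varWords (⋃ n, (A n : Set α))) ∈ U ∧
    ∀ n, ∀ a ∈ A n, ∀ b ∈ A n, U.map (subst a) = U.map (subst b)}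

theorem isClosed_coherentUltrafilters : IsClosed (coherentUltrafilters A) := by
  simp only [coherentUltrafilters, Set.ofPred_and, Set.ofPred_forall, Ultrafilter.map_eq_map_iff]
  exact (ultrafilter_isClosed_basic _).inter <| isClosed_iInter fun n =>
    isClosed_iInter fun a => isClosed_iInter fun _ => isClosed_iInter fun b =>
      isClosed_iInter fun _ => isClosed_iInter fun D => ultrafilter_isClosed_basic _

theorem mul_mem_coherentUltrafilters {U V : Ultrafilter (FreeMonoid (Option α))}
    (hU : U ∈ coherentUltrafilters A) (hV : V ∈ coherentUltrafilters A) :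
    U * V ∈ coherentUltrafilters A := by
  refine ⟨?_, fun n a ha b hb => ?_⟩
  · rw [Ultrafilter.mem_mul_iff]
    filter_upwards [hU.1] with s hs
    filter_upwards [hV.1] with t ht
    exact mul_mem hs ht
  · rw [Ultrafilter.map_mulHom, Ultrafilter.map_mulHom, hU.2 n a ha b hb, hV.2 n a ha b hb]

def agreeingVarWords (F : Finset (Set (FreeMonoid α))) (N : ℕ) :
    Set (FreeMonoid (Option α)) :=
  {s | s ∈ varWords (⋃ n, (A n : Set α)) ∧
    ∀ D ∈ F, ∀ a ∈ A N, ∀ b ∈ A N, (subst a s ∈ D ↔ subst b s ∈ D)}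

theorem agreeingVarWords_nonempty (F : Finset (Set (FreeMonoid α))) (N : ℕ) :
    (agreeingVarWords A F N).Nonempty := by
  obtain ⟨s, hs, hagree⟩ := exists_isVarWord_subst_eq (A N) fun w (D : F) => w ∈ D.1
  exact ⟨s, ⟨fun a ha => Set.mem_iUnion.2 ⟨N, hs.1 a ha⟩, hs.2⟩,
    fun D hD a ha b hb => Eq.to_iff (congrFun (hagree a ha b hb) ⟨D, hD⟩)⟩

theorem agreeingVarWords_antitone {A : ℕ → Finset α} (hA : Monotone A)
    {F F' : Finset (Set (FreeMonoid α))} {N N' : ℕ} (hF : F ⊆ F') (hN : N ≤ N') :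
    agreeingVarWords A F' N' ⊆ agreeingVarWords A F N :=
  fun _ ⟨hs, hagree⟩ => ⟨hs, fun D hD a ha b hb => hagree D (hF hD) a (hA hN ha) b (hA hN hb)⟩

theorem coherentUltrafilters_nonempty (hA : Monotone A) : (coherentUltrafilters A).Nonempty := by
  classical
  let 𝓕 := ⨅ i : Finset (Set (FreeMonoid α)) × ℕ, 𝓟 (agreeingVarWords A i.1 i.2)
  have : 𝓕.NeBot := by
    refine iInf_neBot_of_directed' (fun i j => ⟨(i.1 ∪ j.1, max i.2 j.2), ?_, ?_⟩)
      fun i => principal_neBot_iff.2 (agreeingVarWords_nonempty A i.1 i.2)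
    · exact principal_mono.2 <| agreeingVarWords_antitone hA Finset.subset_union_left
        (le_max_left _ _)
    · exact principal_mono.2 <| agreeingVarWords_antitone hA Finset.subset_union_right
        (le_max_right _ _)
  have hmem : ∀ F N, agreeingVarWords A F N ∈ Ultrafilter.of 𝓕 := fun F N =>
    Ultrafilter.of_le 𝓕 (mem_iInf_of_mem (F, N) (mem_principal_self _))
  refine ⟨Ultrafilter.of 𝓕, mem_of_superset (hmem ∅ 0) fun s hs => hs.1,
    fun n a ha b hb => Ultrafilter.map_eq_map_iff.2 fun D => ?_⟩
  exact mem_of_superset (hmem {D} n) fun s hs => hs.2 D (Finset.mem_singleton_self D) a ha b hb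

theorem exists_idempotent_mem_coherentUltrafilters (hA : Monotone A) :
    ∃ U ∈ coherentUltrafilters A, U * U = U :=
  exists_idempotent_in_compact_subsemigroup Ultrafilter.continuous_mul_left _
    (coherentUltrafilters_nonempty A hA) (isClosed_coherentUltrafilters A).isCompact
    fun _ hU _ hV => mul_mem_coherentUltrafilters A hU hV

end Coherent

section Selection

variable {A : ℕ → Finset α} {U : Ultrafilter (FreeMonoid (Option α))}
  {p : Ultrafilter (FreeMonoid α)}

theorem exists_subst_mem_of_map_eq (hp : p * p = p) {T : Set (FreeMonoid (Option α))}
    (hT : T ∈ U) {B : Finset α} (hB : ∀ a ∈ B, U.map (subst a) = p) {D : Set (FreeMonoid α)}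
    (hD : D ∈ p) : ∃ t ∈ T, ∀ a ∈ B, subst a t ∈ D ∧ {w | subst a t * w ∈ D} ∈ p := by
  have hD' : D ∩ {v | {w | v * w ∈ D} ∈ p} ∈ p :=
    inter_mem hD (Ultrafilter.mem_mul_iff.1 (hp.symm ▸ hD))
  have hsubst : ∀ a ∈ B, subst a ⁻¹' (D ∩ {v | {w | v * w ∈ D} ∈ p}) ∈ U := fun a ha =>
    Ultrafilter.mem_map.1 ((hB a ha).symm ▸ hD')
  obtain ⟨t, ht, hta⟩ := U.nonempty_of_mem (inter_mem hT ((eventually_all_finset B).2 hsubst))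
  exact ⟨t, ht, hta⟩

theorem exists_seq_prod_subst_mem (hp : p * p = p) {T : Set (FreeMonoid (Option α))}
    (hT : T ∈ U) (hA : ∀ n, ∀ a ∈ A n, U.map (subst a) = p)
    {C : Set (FreeMonoid α)} (hC : C ∈ p) :
    ∃ t : ℕ → FreeMonoid (Option α), (∀ k, t k ∈ T) ∧
      ∀ (n : ℕ) (m : Fin (n + 1) → ℕ) (a : Fin (n + 1) → α), StrictMono m →
        (∀ j, a j ∈ A (m j)) → (List.ofFn fun j => subst (a j) (t (m j))).prod ∈ C := by
  choose! t ht using fun k D (hD : D ∈ p) => exists_subst_mem_of_map_eq hp hT (hA k) hD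
  -- `S (k + 1)` keeps only the words that may follow any `subst a (t k)`, `a ∈ A k`.
  let S : ℕ → Set (FreeMonoid α) :=
    fun k => Nat.rec C (fun k D => D ∩ {w | ∀ a ∈ A k, subst a (t k D) * w ∈ D}) k
  have hS : ∀ k, S k ∈ p := by
    intro k
    induction k with
    | zero => exact hC
    | succ k ih =>
      exact inter_mem ih
        ((eventually_all_finset (A k)).2 fun a ha => ((ht k _ ih).2 a ha).2)
  have hS_anti : Antitone S := antitone_nat_of_succ_le fun k => Set.inter_subset_left
  refine ⟨fun k => t k (S k), fun k => (ht k _ (hS k)).1, ?_⟩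
  suffices hprod : ∀ (n : ℕ) (m : Fin (n + 1) → ℕ) (a : Fin (n + 1) → α), StrictMono m →
      (∀ j, a j ∈ A (m j)) →
        (List.ofFn fun j => subst (a j) (t (m j) (S (m j)))).prod ∈ S (m 0) from
    fun n m a hm ha => hS_anti (Nat.zero_le _) (hprod n m a hm ha)
  intro n
  induction n with
  | zero =>
    intro m a _ ha
    simpa using ((ht _ _ (hS (m 0))).2 (a 0) (ha 0)).1
  | succ n ih =>
    intro m a hm ha
    have htail := ih (fun j => m j.succ) (fun j => a j.succ) (hm.comp Fin.strictMono_succ)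
      (fun j => ha j.succ)
    have hS_tail : S (m 1) ⊆ S (m 0 + 1) := hS_anti (hm Fin.zero_lt_one)
    rw [List.ofFn_succ, List.prod_cons]
    exact (hS_tail htail).2 (a 0) (ha 0)

end Selection

end HJ

open HJ in
theorem stmt1_general {α : Type*} (A : ℕ → Finset α) (hmono : Monotone A)
    (hne : ∀ n, (A n).Nonempty)
    (r : ℕ) (c : List α → Fin r) :
    ∃ t : ℕ → List (Option α),
      (∀ n, IsVarWord (⋃ n, (A n : Set α)) (t n)) ∧
      ∃ col : Fin r,
        ∀ (n : ℕ) (m : Fin (n + 1) → ℕ) (a : Fin (n + 1) → α),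
          StrictMono m → (∀ j, a j ∈ A (m j)) →
          c ((List.ofFn fun j => substC (t (m j)) (a j)).flatten) = col := by
  obtain ⟨U, ⟨hU, hUcoh⟩, hUU⟩ := exists_idempotent_mem_coherentUltrafilters A hmono
  obtain ⟨a₀, ha₀⟩ := hne 0
  set p := U.map (subst a₀)
  have hp : p * p = p := by rw [← Ultrafilter.map_mulHom, hUU]
  have hUp : ∀ n, ∀ a ∈ A n, U.map (subst a) = p := fun n a ha =>
    hUcoh n a ha a₀ (hmono (Nat.zero_le n) ha₀)
  obtain ⟨col, hcol⟩ := (p.map fun w => c w.toList).eq_pure_of_finite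
  have hC : {w | c w.toList = col} ∈ p := by
    have : ({col} : Set (Fin r)) ∈ p.map fun w => c w.toList := hcol ▸ Set.mem_singleton col
    exact Ultrafilter.mem_map.1 this
  obtain ⟨t, ht, hprod⟩ := exists_seq_prod_subst_mem hp hU hUp hC
  refine ⟨fun k => (t k).toList, ht, col, fun n m a hm ha => ?_⟩
  have := hprod n m a hm ha
  rw [Set.mem_ofPred_eq, FreeMonoid.toList_prod, List.map_ofFn] at this
  exact this

open HJ in
/-- Infinitary Hales–Jewett for an increasing sequence of finite alphabets. -/
theorem stmt1 {α : Type*} (A : ℕ → Finset α) (hmono : Monotone A)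
    (hne : ∀ n, (A n).Nonempty)
    (r : ℕ) (hr : 1 ≤ r) (c : List α → Fin r) :
    ∃ t : ℕ → List (Option α),
      (∀ n, IsVarWord (⋃ n, (A n : Set α)) (t n)) ∧
      ∃ col : Fin r,
        ∀ (n : ℕ) (m : Fin (n + 1) → ℕ) (a : Fin (n + 1) → α),
          StrictMono m → (∀ j, a j ∈ A (m j)) →
          c ((List.ofFn fun j => substC (t (m j)) (a j)).flatten) = col :=
  stmt1_general A hmono hne r c
end

section
/- Let A be a finite nonempty alphabet, E ⊆ W(A), and 𝐬 = (s_n(x))_{n=0}^∞ an infinite sequence of variable words over A such that E is large in 𝐬. Then there exist m ∈ ℕ and a variable word w(x) ∈ ⟨(s_n(x))_{n=0}^m⟩_v such that {w(a) : a ∈ A} ⊆ E. -/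
/-! Suppose no variable word of an initial span has all its substitution instances in `E`.
Given finitely many constant words `F` from the span of `s 0, …, s (p - 1)`, colour each
constant word `z` of a long block starting at `p` by the set of prefixes `g ∈ {[]} ∪ F` with
`g ++ z ∈ E`. By Hales–Jewett some combinatorial line is monochromatic; it spells a variable
word `u`, and its colour is empty, for otherwise `g ++ u` would be a variable word of an
initial span with all its instances in `E`. Iterating, with `F` enlarged by all `g ++ u(a)`,
yields an extracted subsequence whose constant span misses `E`, so `E` is not large. -/

namespace HJ

variable {α : Type*}

@[simp]
lemma substV_none (s : List (Option α)) : substV s none = s := by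
  have h : (fun c : Option α => Option.elim c none some) = id := by
    funext c; cases c <;> rfl
  simp [substV, h]

lemma substC_substV (s : List (Option α)) (b : Option α) (a : α) :
    substC (substV s b) a = substC s (b.getD a) := by
  simp only [substC, substV, List.map_map]
  refine List.map_congr_left fun c _ => ?_
  cases c <;> cases b <;> rfl

lemma substC_flatten_ofFn_substV {n : ℕ} (s : Fin n → List (Option α))
    (b : Fin n → Option α) (a : α) :
    substC (List.ofFn fun i => substV (s i) (b i)).flatten a
      = (List.ofFn fun i => substC (s i) ((b i).getD a)).flatten := by
  simp only [← substC_substV]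
  simp only [substC, List.map_flatten, List.map_ofFn, Function.comp_def]

lemma flatten_ofFn_finAppend {β : Type*} {m n : ℕ} (f : Fin (m + n) → List β) :
    (List.ofFn f).flatten
      = (List.ofFn fun i => f (Fin.castAdd n i)).flatten
        ++ (List.ofFn fun i => f (Fin.natAdd m i)).flatten := by
  rw [List.ofFn_add, List.flatten_append]
  rfl

lemma strictMono_finAppend {β : Type*} [Preorder β] {m n : ℕ} {f : Fin m → β}
    {g : Fin n → β} (hf : StrictMono f) (hg : StrictMono g) (hfg : ∀ i j, f i < g j) :
    StrictMono (Fin.append f g) := by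
  intro i j hij
  induction i using Fin.addCases with
  | left i =>
    induction j using Fin.addCases with
    | left j =>
      rw [Fin.append_left, Fin.append_left]
      exact hf hij
    | right j => rw [Fin.append_left, Fin.append_right]; exact hfg i j
  | right i =>
    induction j using Fin.addCases with
    | left j =>
      have := Fin.lt_def.1 hij
      simp only [Fin.val_natAdd, Fin.val_castAdd] at this
      omega
    | right j =>
      rw [Fin.append_right, Fin.append_right]
      exact hg ((Fin.natAdd_lt_natAdd_iff _).1 hij)

section Spans

variable {B : ℕ → Set α} {s : ℕ → List (Option α)} {I J : Set ℕ}

lemma mem_constSpan_of_pos {n : ℕ} (hn : 0 < n) {l : Fin n → ℕ} {a : Fin n → α}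
    (hl : StrictMono l) (hI : ∀ i, l i ∈ I) (hB : ∀ i, a i ∈ B (l i)) :
    (List.ofFn fun i => substC (s (l i)) (a i)).flatten ∈ constSpan B s I := by
  obtain ⟨n, rfl⟩ := Nat.exists_eq_add_one.2 hn
  exact ⟨n, l, a, hl, hI, hB, rfl⟩

lemma mem_varSpan_of_pos {n : ℕ} (hn : 0 < n) {l : Fin n → ℕ} {b : Fin n → Option α}
    (hl : StrictMono l) (hI : ∀ i, l i ∈ I) (hB : ∀ i, ∀ a, b i = some a → a ∈ B (l i))
    (hnone : none ∈ (List.ofFn fun i => substV (s (l i)) (b i)).flatten) :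
    (List.ofFn fun i => substV (s (l i)) (b i)).flatten ∈ varSpan B s I := by
  obtain ⟨n, rfl⟩ := Nat.exists_eq_add_one.2 hn
  exact ⟨n, l, b, hl, hI, hB, hnone, rfl⟩

lemma constSpan_mono (h : I ⊆ J) : constSpan B s I ⊆ constSpan B s J := by
  rintro w ⟨n, l, a, hl, hI, hB, rfl⟩
  exact ⟨n, l, a, hl, fun i => h (hI i), hB, rfl⟩

lemma varSpan_mono (h : I ⊆ J) : varSpan B s I ⊆ varSpan B s J := by
  rintro w ⟨n, l, b, hl, hI, hB, hw, rfl⟩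
  exact ⟨n, l, b, hl, fun i => h (hI i), hB, hw, rfl⟩

lemma append_mem_constSpan (hIJ : ∀ i ∈ I, ∀ j ∈ J, i < j) {f g : List α}
    (hf : f ∈ constSpan B s I) (hg : g ∈ constSpan B s J) :
    f ++ g ∈ constSpan B s (I ∪ J) := by
  obtain ⟨n₁, l₁, a₁, hl₁, hI₁, hB₁, rfl⟩ := hf
  obtain ⟨n₂, l₂, a₂, hl₂, hI₂, hB₂, rfl⟩ := hg
  have h := mem_constSpan_of_pos (B := B) (s := s) (Nat.add_pos_right _ n₂.succ_pos)
    (strictMono_finAppend hl₁ hl₂ fun i j => hIJ _ (hI₁ i) _ (hI₂ j))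
    (I := I ∪ J) (fun i => by induction i using Fin.addCases <;> simp [hI₁, hI₂])
    (a := Fin.append a₁ a₂) (fun i => by induction i using Fin.addCases <;> simp [hB₁, hB₂])
  rw [flatten_ofFn_finAppend] at h
  simpa only [Fin.append_left, Fin.append_right] using h

end Spans

section ConstantAlphabet

variable {S : Set α} {s : ℕ → List (Option α)} {I J : Set ℕ}

lemma substC_mem_constSpan {u : List (Option α)} (hu : u ∈ varSpan (fun _ => S) s I)
    {a : α} (ha : a ∈ S) : substC u a ∈ constSpan (fun _ => S) s I := by
  obtain ⟨n, l, b, hl, hI, hB, -, rfl⟩ := hu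
  refine ⟨n, l, fun i => (b i).getD a, hl, hI, fun i => ?_, substC_flatten_ofFn_substV _ _ _⟩
  show (b i).getD a ∈ S
  cases hb : b i
  · simpa using ha
  · simpa using hB i _ hb

lemma exists_mem_varSpan_substC_eq_append (hIJ : ∀ i ∈ I, ∀ j ∈ J, i < j) {f : List α}
    {u : List (Option α)} (hf : f ∈ constSpan (fun _ => S) s I)
    (hu : u ∈ varSpan (fun _ => S) s J) :
    ∃ v ∈ varSpan (fun _ => S) s (I ∪ J), ∀ a, substC v a = f ++ substC u a := by
  obtain ⟨n₁, l₁, a₁, hl₁, hI₁, hS₁, rfl⟩ := hf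
  obtain ⟨n₂, l₂, b₂, hl₂, hI₂, hS₂, hnone, rfl⟩ := hu
  refine ⟨_, mem_varSpan_of_pos (Nat.add_pos_right _ n₂.succ_pos)
    (b := Fin.append (some ∘ a₁) b₂)
    (strictMono_finAppend hl₁ hl₂ fun i j => hIJ _ (hI₁ i) _ (hI₂ j))
    (fun i => by induction i using Fin.addCases <;> simp [hI₁, hI₂]) (fun i => ?_) ?_,
    fun a => ?_⟩
  · induction i using Fin.addCases
    · simp only [Fin.append_left, Function.comp_apply, Option.some.injEq]
      rintro _ rfl; exact hS₁ _
    · simpa using hS₂ _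
  · rw [flatten_ofFn_finAppend]
    simp only [Fin.append_left, Fin.append_right]
    exact List.mem_append_right _ hnone
  · rw [substC_flatten_ofFn_substV, flatten_ofFn_finAppend, substC_flatten_ofFn_substV]
    simp

end ConstantAlphabet

open Combinatorics

lemma exists_isMono_line_fin (β κ : Type*) [Finite β] [Finite κ] :
    ∃ n, ∀ C : (Fin n → β) → κ, ∃ l : Line β (Fin n), l.IsMono C := by
  obtain ⟨ι, _, hι⟩ := Line.exists_mono_in_high_dimension β κ
  let e := (Fintype.equivFin ι).symm
  refine ⟨Fintype.card ι, fun C => ?_⟩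
  obtain ⟨l, c, hc⟩ := hι fun x => C (x ∘ e)
  obtain ⟨i, hi⟩ := l.proper
  exact ⟨⟨l.idxFun ∘ e, e.symm i, by simpa using hi⟩, c, hc⟩

section LineWords

variable {S : Set α} (s : ℕ → List (Option α)) (p : ℕ) {n : ℕ}

def lineWord (l : Line S (Fin n)) : List (Option α) :=
  (List.ofFn fun i => substV (s (p + i)) ((l.idxFun i).map (↑))).flatten

def blockWord (x : Fin n → S) : List α :=
  (List.ofFn fun i => substC (s (p + i)) (x i)).flatten

lemma substC_lineWord (l : Line S (Fin n)) {a : α} (ha : a ∈ S) :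
    substC (lineWord s p l) a = blockWord s p (l ⟨a, ha⟩) := by
  rw [lineWord, substC_flatten_ofFn_substV, blockWord]
  congr! with i
  rw [Line.coe_apply]
  cases l.idxFun i <;> rfl

variable {s}

lemma lineWord_mem_varSpan (hs : ∀ k, none ∈ s k) (l : Line S (Fin n)) :
    lineWord s p l ∈ varSpan (fun _ => S) s (Set.Ico p (p + n)) := by
  obtain ⟨i₀, hi₀⟩ := l.proper
  refine mem_varSpan_of_pos i₀.pos (fun i j hij => by simpa using hij) (fun i => by simp)
    (fun i a hb => ?_) ?_
  · cases h : l.idxFun i <;> simp [h] at hb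
    exact hb ▸ Subtype.prop _
  · exact List.mem_flatten.2 ⟨_, List.mem_ofFn.2 ⟨i₀, rfl⟩, by simpa [hi₀] using hs _⟩

end LineWords

section Avoiding

variable {S : Set α} {E : Set (List α)} {s : ℕ → List (Option α)}

lemma exists_varSpan_forall_append_substC_notMem [Finite S] (hs : ∀ k, none ∈ s k)
    (H : ∀ m, ∀ v ∈ varSpan (fun _ => S) s (Set.Iic m), ∃ a ∈ S, substC v a ∉ E)
    (p : ℕ) {F : Set (List α)} (hFfin : F.Finite)
    (hF : F ⊆ constSpan (fun _ => S) s (Set.Iio p)) :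
    ∃ q, p < q ∧ ∃ u ∈ varSpan (fun _ => S) s (Set.Ico p q),
      ∀ g ∈ insert [] F, ∀ a ∈ S, g ++ substC u a ∉ E := by
  have := (hFfin.insert []).to_subtype
  obtain ⟨n, hn⟩ := exists_isMono_line_fin S (Set ↥(insert [] F))
  obtain ⟨l, c, hc⟩ := hn fun x => {g | g.1 ++ blockWord s p x ∈ E}
  obtain ⟨i₀, -⟩ := l.proper
  have hu := lineWord_mem_varSpan p hs l
  have hIco : Set.Ico p (p + n) ⊆ Set.Iic (p + n) :=
    Set.Ico_subset_Iio_self.trans Set.Iio_subset_Iic_self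
  refine ⟨p + n, by have := i₀.pos; omega, _, hu, fun g hg a ha hgE => ?_⟩
  have hgu : ∀ b ∈ S, g ++ substC (lineWord s p l) b ∈ E := by
    intro b hb
    have hgc : ⟨g, hg⟩ ∈ c := by
      rw [← hc ⟨a, ha⟩]
      simpa [substC_lineWord s p l ha] using hgE
    rw [← hc ⟨b, hb⟩] at hgc
    simpa [substC_lineWord s p l hb] using hgc
  obtain ⟨v, hv, hvu⟩ : ∃ v ∈ varSpan (fun _ => S) s (Set.Iic (p + n)),
      ∀ b, substC v b = g ++ substC (lineWord s p l) b := by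
    rcases hg with rfl | hg
    · exact ⟨_, varSpan_mono hIco hu, fun b => rfl⟩
    · obtain ⟨v, hv, hvu⟩ := exists_mem_varSpan_substC_eq_append
        (fun i hi j hj => lt_of_lt_of_le hi hj.1) (hF hg) hu
      have hIio : Set.Iio p ⊆ Set.Iic (p + n) :=
        Set.Iio_subset_Iic_self.trans (Set.Iic_subset_Iic.2 (Nat.le_add_right p n))
      exact ⟨v, varSpan_mono (Set.union_subset hIio hIco) hv, hvu⟩
  obtain ⟨b, hb, hbE⟩ := H _ v hv
  exact hbE (hvu b ▸ hgu b hb)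

lemma append_substC_mem_constSpan {p q : ℕ} (hpq : p ≤ q) {F : Set (List α)}
    (hF : F ⊆ constSpan (fun _ => S) s (Set.Iio p)) {u : List (Option α)}
    (hu : u ∈ varSpan (fun _ => S) s (Set.Ico p q)) {g : List α} (hg : g ∈ insert [] F)
    {a : α} (ha : a ∈ S) : g ++ substC u a ∈ constSpan (fun _ => S) s (Set.Iio q) := by
  have hua := substC_mem_constSpan hu ha
  rcases hg with rfl | hg
  · exact constSpan_mono Set.Ico_subset_Iio_self hua
  · exact constSpan_mono (Set.union_subset (Set.Iio_subset_Iio hpq) Set.Ico_subset_Iio_self)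
      (append_mem_constSpan (fun i hi j hj => lt_of_lt_of_le hi hj.1) (hF hg) hua)

lemma constSpan_subset_iUnion {B : ℕ → Set α} {w : ℕ → List (Option α)}
    {F : ℕ → Set (List α)} (hF : Monotone F)
    (hstep : ∀ n, ∀ g ∈ insert [] (F n), ∀ a ∈ B n, g ++ substC (w n) a ∈ F (n + 1)) :
    constSpan B w Set.univ ⊆ ⋃ n, F n := by
  rintro _ ⟨k, l, a, hl, -, ha, rfl⟩
  refine Set.mem_iUnion.2 ⟨l (Fin.last k) + 1, ?_⟩
  induction k with
  | zero => simpa using hstep _ [] (Set.mem_insert _ _) _ (ha 0)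
  | succ k ih =>
    have hinit := ih (fun i => l i.castSucc) (fun i => a i.castSucc)
      (hl.comp Fin.strictMono_castSucc) (fun i => ha _)
    rw [List.ofFn_succ', List.concat_eq_append, List.flatten_append]
    simpa using hstep _ _ (Set.mem_insert_of_mem _
      (hF (hl (Fin.castSucc_lt_last (Fin.last k))) hinit)) _ (ha _)

lemma not_isLarge_of_forall_exists_avoiding [Finite S]
    (h : ∀ p (F : Set (List α)), F.Finite → F ⊆ constSpan (fun _ => S) s (Set.Iio p) →
      ∃ q, p < q ∧ ∃ u ∈ varSpan (fun _ => S) s (Set.Ico p q),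
        ∀ g ∈ insert [] F, ∀ a ∈ S, g ++ substC u a ∉ E) :
    ¬ IsLarge (fun _ => S) E s := by
  choose! q hq u hu hE using h
  -- `stage n` = (start of the `n`-th block, the constant words spelled by the first `n` blocks)
  let stage : ℕ → ℕ × Set (List α) := fun n => n.rec (0, ∅) fun _ pF =>
    (q pF.1 pF.2, pF.2 ∪ Set.image2 (fun g a => g ++ substC (u pF.1 pF.2) a) (insert [] pF.2) S)
  let m n := (stage n).1
  let F n := (stage n).2
  have hinv : ∀ n, (F n).Finite ∧ F n ⊆ constSpan (fun _ => S) s (Set.Iio (m n)) ∧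
      Disjoint (F n) E := by
    intro n
    induction n with
    | zero => simp [F, stage]
    | succ n ih =>
      obtain ⟨hfin, hsub, hdisj⟩ := ih
      refine ⟨hfin.union ((hfin.insert []).image2 _ (Set.toFinite S)),
        Set.union_subset (hsub.trans (constSpan_mono (Set.Iio_subset_Iio (hq _ _ hfin hsub).le)))
          (Set.image2_subset_iff.2 fun g hg a ha =>
            append_substC_mem_constSpan (hq _ _ hfin hsub).le hsub (hu _ _ hfin hsub) hg ha),
        Set.disjoint_union_left.2 ⟨hdisj, Set.disjoint_left.2 ?_⟩⟩
      rintro _ ⟨g, hg, a, ha, rfl⟩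
      exact hE _ _ hfin hsub g hg a ha
  have hm : StrictMono m := strictMono_nat_of_lt_succ fun n => hq _ _ (hinv n).1 (hinv n).2.1
  intro hlarge
  obtain ⟨e, heE, he⟩ := hlarge (fun n => u (m n) (F n))
    fun _ => ⟨m, rfl, hm, fun i _ => hu _ _ (hinv i).1 (hinv i).2.1⟩
  have hF : Monotone F := monotone_nat_of_le_succ fun n => Set.subset_union_left
  obtain ⟨n, hn⟩ := Set.mem_iUnion.1 (constSpan_subset_iUnion hF
    (fun n g hg a ha => Or.inr ⟨g, hg, a, ha, rfl⟩) he)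
  exact Set.disjoint_left.1 (hinv n).2.2 hn heE

end Avoiding

end HJ

open HJ in
theorem stmt5_general {α : Type*} (A : Finset α)
    (E : Set (List α))
    (s : ℕ → List (Option α)) (hs : ∀ n, IsVarWord (A : Set α) (s n))
    (hlarge : IsLarge (fun _ => (A : Set α)) E s) :
    ∃ (m : ℕ) (w : List (Option α)),
      w ∈ varSpan (fun _ => (A : Set α)) s (Set.Iic m) ∧
      ∀ a ∈ A, substC w a ∈ E := by
  by_contra! H
  exact not_isLarge_of_forall_exists_avoiding
    (fun p _ hFfin hF =>
      exists_varSpan_forall_append_substC_notMem (fun k => (hs k).2) H p hFfin hF) hlarge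

open HJ in
/-- A large set contains a full substitution instance set `{w(a) : a ∈ A}` of
some variable word in the span of an initial segment. -/
theorem stmt5 {α : Type*} (A : Finset α) (hA : A.Nonempty)
    (E : Set (List α)) (hE : E ⊆ WordsOver (A : Set α))
    (s : ℕ → List (Option α)) (hs : ∀ n, IsVarWord (A : Set α) (s n))
    (hlarge : IsLarge (fun _ => (A : Set α)) E s) :
    ∃ (m : ℕ) (w : List (Option α)),
      w ∈ varSpan (fun _ => (A : Set α)) s (Set.Iic m) ∧
      ∀ a ∈ A, substC w a ∈ E :=
  stmt5_general A E s hs hlarge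
end
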